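/- Let n ≥ 2 and 1 ≤ m ≤ n/2, and let ν be the partition of n consisting of m parts equal to 2 followed by n − 2m parts equal to 1, so ν has M = n − m parts; set n_k := ν₁ + … + ν_k. Then min_{1 ≤ k ≤ M} ( (Σ_{j=1}^{k} j·ν_j) − 1 ) / ( C(n_k, 2) − Σ_{j=1}^{k} (j−1)ν_j ) = 1. -/

import Mathlib

/-!
Writing `ν_j = 1 + [j ≤ m]` and `p = min k m`, the `k`-th quotient has the closed form
`((k(k+1) + p(p+1))/2 − 1) / (k p)`: the denominator collapses to `k p`. The numerator exceeds
it by `(k − p)²/2 + (k + p)/2 − 1 ≥ 0`, with equality at `k = p = 1`.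
-/

open Finset

lemma sum_Icc_one_cast_id (k : ℕ) : ∑ j ∈ Icc 1 k, (j : ℝ) = k * (k + 1) / 2 := by
  induction k with
  | zero => simp
  | succ k ih =>
    rw [sum_Icc_succ_top (by omega), ih]
    push_cast; ring

lemma Icc_one_filter_le (k m : ℕ) : {j ∈ Icc 1 k | j ≤ m} = Icc 1 (min k m) := by
  ext j; simp only [mem_filter, mem_Icc, le_min_iff]; tauto

lemma sum_Icc_one_mul_two_or_one {R : Type*} [NonAssocSemiring R] (f : ℕ → R) (k m : ℕ) :
    ∑ j ∈ Icc 1 k, f j * (((if j ≤ m then 2 else 1 : ℕ)) : R) =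
      ∑ j ∈ Icc 1 k, f j + ∑ j ∈ Icc 1 (min k m), f j := by
  have hsplit : ∀ j, f j * (((if j ≤ m then 2 else 1 : ℕ)) : R) = f j + if j ≤ m then f j else 0 :=
    fun j => by split_ifs <;> simp [mul_two]
  simp only [hsplit, sum_add_distrib, ← sum_filter, Icc_one_filter_le]

lemma sum_Icc_one_two_or_one (k m : ℕ) :
    ∑ j ∈ Icc 1 k, (if j ≤ m then 2 else 1) = k + min k m := by
  simpa using sum_Icc_one_mul_two_or_one (R := ℕ) (fun _ => 1) k m

/-- The `k`-th quotient of the minimum, for `ν = (2^m, 1^{n-2m})`. -/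
noncomputable def richardsonRatio (m k : ℕ) : ℝ :=
  ((∑ j ∈ Finset.Icc 1 k, (j : ℝ) * (((if j ≤ m then 2 else 1) : ℕ) : ℝ)) - 1) /
    ((Nat.choose (∑ j ∈ Finset.Icc 1 k, (if j ≤ m then 2 else 1)) 2 : ℝ)
      - ∑ j ∈ Finset.Icc 1 k, ((j : ℝ) - 1) * (((if j ≤ m then 2 else 1) : ℕ) : ℝ))

lemma richardsonRatio_eq (m k : ℕ) :
    richardsonRatio m k =
      ((k * (k + 1) + min k m * (min k m + 1)) / 2 - 1) / (k * min k m) := by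
  have hsub : ∀ k : ℕ, ∑ j ∈ Icc 1 k, ((j : ℝ) - 1) = k * (k + 1) / 2 - k := fun k => by
    simp [sum_sub_distrib, sum_Icc_one_cast_id]
  rw [richardsonRatio, sum_Icc_one_mul_two_or_one, sum_Icc_one_mul_two_or_one,
    sum_Icc_one_two_or_one, Nat.cast_choose_two, hsub, hsub, sum_Icc_one_cast_id,
    sum_Icc_one_cast_id]
  push_cast
  ring

lemma one_le_richardsonRatio {m k : ℕ} (hm : 1 ≤ m) (hk : 1 ≤ k) : 1 ≤ richardsonRatio m k := by
  rw [richardsonRatio_eq]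
  set p := min k m
  have hp : (1 : ℝ) ≤ p := by exact_mod_cast le_min hk hm
  have hk' : (1 : ℝ) ≤ k := by exact_mod_cast hk
  rw [le_div_iff₀ (by positivity)]
  nlinarith [sq_nonneg ((k : ℝ) - p)]

lemma richardsonRatio_one {m : ℕ} (hm : 1 ≤ m) : richardsonRatio m 1 = 1 := by
  rw [richardsonRatio_eq, min_eq_left hm]
  norm_num

theorem stmt14_general (n m : ℕ) (hm : 1 ≤ m) (hmn : 2 * m ≤ n) :
    sInf {t : ℝ | ∃ k, 1 ≤ k ∧ k ≤ n - m ∧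
      t = ((∑ j ∈ Finset.Icc 1 k, (j : ℝ) * (((if j ≤ m then 2 else 1) : ℕ) : ℝ)) - 1) /
        ((Nat.choose (∑ j ∈ Finset.Icc 1 k, (if j ≤ m then 2 else 1)) 2 : ℝ)
          - ∑ j ∈ Finset.Icc 1 k, ((j : ℝ) - 1) * (((if j ≤ m then 2 else 1) : ℕ) : ℝ))} = 1 := by
  change sInf {t : ℝ | ∃ k, 1 ≤ k ∧ k ≤ n - m ∧ t = richardsonRatio m k} = 1
  refine IsLeast.csInf_eq ⟨⟨1, le_rfl, by omega, (richardsonRatio_one hm).symm⟩, ?_⟩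
  rintro t ⟨k, hk, -, rfl⟩
  exact one_le_richardsonRatio hm hk

/-- For `n ≥ 2` and `1 ≤ m ≤ n/2`, let `ν = (2^m, 1^{n−2m})` be the
(`1`-indexed) partition of `n` with `m` parts equal to `2` followed by `n − 2m` parts equal
to `1`, so `ν` has `M = n − m` parts; set `n_k := ν₁ + … + ν_k`.  Then
`min_{1 ≤ k ≤ M} ((∑_{j=1}^k j·ν_j) − 1) / (C(n_k,2) − ∑_{j=1}^k (j−1)·ν_j) = 1`. -/
theorem stmt14 (n m : ℕ) (hn : 2 ≤ n) (hm : 1 ≤ m) (hmn : 2 * m ≤ n) :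
    sInf {t : ℝ | ∃ k, 1 ≤ k ∧ k ≤ n - m ∧
      t = ((∑ j ∈ Finset.Icc 1 k, (j : ℝ) * (((if j ≤ m then 2 else 1) : ℕ) : ℝ)) - 1) /
        ((Nat.choose (∑ j ∈ Finset.Icc 1 k, (if j ≤ m then 2 else 1)) 2 : ℝ)
          - ∑ j ∈ Finset.Icc 1 k, ((j : ℝ) - 1) * (((if j ≤ m then 2 else 1) : ℕ) : ℝ))} = 1 :=
  stmt14_general n m hm hmn
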